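/- Let U be the inductive type with constructors zero : U, s : U → U, and const : K → U for an arbitrary index type K. A term t ∈ U is a number if t = sⁱ(zero) for some i ≥ 0; it is an odd number if t = s^{2k+1}(zero) for some k ≥ 0. Let the atom type be A = U, an atom t being written o(t). Consider the ground normal program ODD consisting of the clauses (o(s(t)), ∅, {o(t)}) for all t ∈ U. Let Snf = {o(t) | t is an odd number} and St = {o(t) | if t is a number then t is an odd number}. Let (T*, F*) be the Fitting model of ODD. Then Snf ⊆ T* ⊆ St and (A ∖ St) ⊆ F* ⊆ (A ∖ Snf). -/

import Mathlib

/-- The Fitting operator `Φ_P` of a ground normal program `P`. -/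
def fitting {A : Type*} (P : Set (A × Finset A × Finset A)) (TF : Set A × Set A) :
    Set A × Set A :=
  ({h | ∃ pos neg : Finset A, (h, pos, neg) ∈ P ∧ ↑pos ⊆ TF.1 ∧ ↑neg ⊆ TF.2},
   {a | ∀ pos neg : Finset A, (a, pos, neg) ∈ P →
      (↑pos ∩ TF.2 : Set A) ≠ ∅ ∨ (↑neg ∩ TF.1 : Set A) ≠ ∅})

/-- The Herbrand universe of a language with `zero`, unary `s`, and additional
constants indexed by `K`. -/
inductive U (K : Type*) where
  | zero : U K
  | s : U K → U K
  | const : K → U K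

/-- `t` is a number, i.e. `t = sⁱ(zero)` for some `i ≥ 0`. -/
def isNumber {K : Type*} (t : U K) : Prop := ∃ i : ℕ, t = U.s^[i] U.zero

/-- `t` is an odd number, i.e. `t = s^(2k+1)(zero)` for some `k ≥ 0`. -/
def isOddNumber {K : Type*} (t : U K) : Prop := ∃ k : ℕ, t = U.s^[2 * k + 1] U.zero

/-- The ground instantiation of the program `{ o(s(X)) ← ¬o(X). }`;
an atom `o(t)` is represented by the term `t` itself. -/
def ODD (K : Type*) : Set (U K × Finset (U K) × Finset (U K)) :=
  {cl | ∃ t, cl = (U.s t, ∅, {t})}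

/-- `Snf`: the atoms `o(t)` with `t` an odd number. -/
def Snf (K : Type*) : Set (U K) := {t | isOddNumber t}

/-- `St`: the atoms `o(t)` such that if `t` is a number then `t` is odd. -/
def St (K : Type*) : Set (U K) := {t | isNumber t → isOddNumber t}

/-! `Φ_ODD (T, F) = (s(F), (s(Tᶜ))ᶜ)`. In a fixed point this gives `zero ∈ F`, and an induction puts
`sⁱ(zero)` in `F` for even `i` and in `T` for odd `i`. Conversely, the pair (terms of odd `s`-depth,
terms of even `s`-depth) is itself a fixed point, so the least fixed point lies below it. -/

namespace U

variable {K : Type*}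

def depth : U K → ℕ
  | zero => 0
  | s t => depth t + 1
  | const _ => 0

lemma s_injective : Function.Injective (s : U K → U K) := fun _ _ h => s.inj h

lemma zero_notMem_image_s (X : Set (U K)) : zero ∉ s '' X := by
  rintro ⟨_, _, h⟩
  cases h

lemma depth_iterate_s_zero (i : ℕ) : depth (s^[i] (zero : U K)) = i := by
  induction i with
  | zero => rfl
  | succ i ih => rw [Function.iterate_succ_apply', depth, ih]

end U

lemma isOddNumber_iff_isNumber_and_odd_depth {K : Type*} {t : U K} :
    isOddNumber t ↔ isNumber t ∧ Odd t.depth := by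
  constructor
  · rintro ⟨k, rfl⟩
    exact ⟨⟨_, rfl⟩, by rw [U.depth_iterate_s_zero]; exact odd_two_mul_add_one k⟩
  · rintro ⟨⟨i, rfl⟩, hi⟩
    rw [U.depth_iterate_s_zero] at hi
    obtain ⟨k, rfl⟩ := hi
    exact ⟨k, rfl⟩

section ODD

variable {K : Type*}

lemma fitting_ODD (TF : Set (U K) × Set (U K)) :
    fitting (ODD K) TF = (U.s '' TF.2, (U.s '' TF.1ᶜ)ᶜ) := by
  refine Prod.ext (Set.ext fun _ => ⟨?_, ?_⟩) (Set.ext fun _ => ⟨?_, ?_⟩)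
  · rintro ⟨_, _, ⟨t, ⟨⟩⟩, -, hneg⟩
    exact ⟨t, hneg (by simp), rfl⟩
  · rintro ⟨t, ht, rfl⟩
    exact ⟨∅, {t}, ⟨t, rfl⟩, by simp, by simpa using ht⟩
  · rintro ha ⟨t, ht, rfl⟩
    rcases ha ∅ {t} ⟨t, rfl⟩ with h | h
    · simp at h
    · exact ht (by simpa using h)
  · rintro ha _ _ ⟨t, ⟨⟩⟩
    right
    simpa using fun ht => ha ⟨t, ht, rfl⟩

lemma iterate_s_zero_mem_of_fitting_ODD_eq {TF : Set (U K) × Set (U K)}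
    (hTF : fitting (ODD K) TF = TF) (i : ℕ) :
    (Even i → U.s^[i] U.zero ∈ TF.2) ∧ (Odd i → U.s^[i] U.zero ∈ TF.1) := by
  have hfix : TF = (U.s '' TF.2, (U.s '' TF.1ᶜ)ᶜ) := hTF.symm.trans (fitting_ODD TF)
  induction i with
  | zero =>
    refine ⟨fun _ => ?_, fun h => absurd h (by decide)⟩
    rw [hfix]
    exact U.zero_notMem_image_s _
  | succ i ih =>
    rw [Function.iterate_succ_apply', Nat.even_add_one, Nat.odd_add_one, Nat.not_even_iff_odd,
      Nat.not_odd_iff_even]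
    refine ⟨fun hi => ?_, fun hi => ?_⟩
    · rw [hfix]
      exact fun ⟨u, hu, heq⟩ => hu (U.s_injective heq ▸ ih.2 hi)
    · rw [hfix]
      exact Set.mem_image_of_mem _ (ih.1 hi)

def parityModel (K : Type*) : Set (U K) × Set (U K) :=
  ({t | Odd t.depth}, {t | Even t.depth})

lemma fitting_ODD_parityModel : fitting (ODD K) (parityModel K) = parityModel K := by
  rw [fitting_ODD]
  refine Prod.ext (Set.ext fun t => ?_) (Set.ext fun t => ?_) <;>
    cases t <;>
    simp [parityModel, U.depth, U.s_injective.mem_set_image, Nat.odd_add_one, Nat.even_add_one]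

end ODD

/-- Example 6 of the paper: the Fitting model `(T*, F*)` of the program `ODD`
(the least fixed point of its Fitting operator) satisfies `Snf ⊆ T* ⊆ St` and
`(A ∖ St) ⊆ F* ⊆ (A ∖ Snf)`, i.e. `ODD` is correct and complete w.r.t. `(Snf, St)`. -/
theorem ODD_fully_correct (K : Type*) (TF : Set (U K) × Set (U K))
    (hTF : IsLeast {x | fitting (ODD K) x = x} TF) :
    Snf K ⊆ TF.1 ∧ TF.1 ⊆ St K ∧ (St K)ᶜ ⊆ TF.2 ∧ TF.2 ⊆ (Snf K)ᶜ := by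
  obtain ⟨hfix, hleast⟩ := hTF
  have hM : TF ≤ parityModel K := hleast fitting_ODD_parityModel
  refine ⟨fun t ht => ?_, fun t ht hnum => ?_, fun t ht => ?_, fun t ht hodd => ?_⟩
  · obtain ⟨⟨i, rfl⟩, hi⟩ := isOddNumber_iff_isNumber_and_odd_depth.1 ht
    rw [U.depth_iterate_s_zero] at hi
    exact (iterate_s_zero_mem_of_fitting_ODD_eq hfix i).2 hi
  · exact isOddNumber_iff_isNumber_and_odd_depth.2 ⟨hnum, hM.1 ht⟩
  · obtain ⟨⟨i, rfl⟩, hi⟩ := Classical.not_imp.1 ht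
    rw [isOddNumber_iff_isNumber_and_odd_depth, U.depth_iterate_s_zero] at hi
    exact (iterate_s_zero_mem_of_fitting_ODD_eq hfix i).1
      (Nat.not_odd_iff_even.1 fun h => hi ⟨⟨i, rfl⟩, h⟩)
  · exact Nat.not_even_iff_odd.2 (isOddNumber_iff_isNumber_and_odd_depth.1 hodd).2 (hM.2 ht)
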